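/- Let σ ∈ ℝ, σ ≠ 0, and let θ₀, θ₁ : ℝ² → ℝ be twice continuously differentiable functions related by the Bäcklund transformation for the hyperbolic sinh-Gordon equation with parameter σ, i.e. ∂θ₁/∂v − ∂θ₀/∂u = (σ·sinh(θ₁+θ₀) + σ⁻¹·sinh(θ₁−θ₀))/2 and ∂θ₁/∂u − ∂θ₀/∂v = (σ·sinh(θ₁+θ₀) − σ⁻¹·sinh(θ₁−θ₀))/2 everywhere. Then both θ₀ and θ₁ satisfy the hyperbolic sinh-Gordon equation: ∂²θⱼ/∂v² − ∂²θⱼ/∂u² = cosh θⱼ · sinh θⱼ for j = 0, 1, at every point of ℝ². -/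

import Mathlib

/-!
Write `D₊ = ∂ᵤ + ∂ᵥ` and `D₋ = ∂ᵥ - ∂ᵤ` for the derivatives along `(1, 1)` and `(-1, 1)`, so that
`∂ᵥ² - ∂ᵤ² = D₋ D₊` on `C²` functions. The sum and the difference of the two Bäcklund equations read
`D₊ (θ₁ - θ₀) = σ sinh (θ₁ + θ₀)` and `D₋ (θ₁ + θ₀) = σ⁻¹ sinh (θ₁ - θ₀)`. Applying the other
light-cone derivative to each (and commuting `D₊`, `D₋` by symmetry of the second derivative) gives
`D₋ D₊ (θ₁ ± θ₀) = cosh (θ₁ ∓ θ₀) sinh (θ₁ ± θ₀)`, the factors `σ` and `σ⁻¹` cancelling. Half the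
sum and half the difference of these are `sinh (2 θ₁) / 2` and `sinh (2 θ₀) / 2`.
-/

noncomputable def pdu (f : ℝ × ℝ → ℝ) (p : ℝ × ℝ) : ℝ :=
  deriv (fun u => f (u, p.2)) p.1

noncomputable def pdv (f : ℝ × ℝ → ℝ) (p : ℝ × ℝ) : ℝ :=
  deriv (fun v => f (p.1, v)) p.2

def BacklundSGh (σ : ℝ) (θ₀ θ₁ : ℝ × ℝ → ℝ) : Prop :=
  ∀ p : ℝ × ℝ,
    pdv θ₁ p - pdu θ₀ p =
      (σ * Real.sinh (θ₁ p + θ₀ p) + σ⁻¹ * Real.sinh (θ₁ p - θ₀ p)) / 2 ∧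
    pdu θ₁ p - pdv θ₀ p =
      (σ * Real.sinh (θ₁ p + θ₀ p) - σ⁻¹ * Real.sinh (θ₁ p - θ₀ p)) / 2

open Real

section SecondDerivative

variable {E : Type*} [NormedAddCommGroup E] [NormedSpace ℝ E] {f g : E → ℝ} {x : E}

theorem ContDiff.differentiable_fderiv (hf : ContDiff ℝ 2 f) : Differentiable ℝ (fderiv ℝ f) :=
  (hf.fderiv_right (m := 1) (by norm_num)).differentiable (by norm_num)

theorem fderiv_fderiv_apply_eq (hf : DifferentiableAt ℝ (fderiv ℝ f) x) (v w : E) :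
    fderiv ℝ (fun y => fderiv ℝ f y v) x w = fderiv ℝ (fderiv ℝ f) x w v := by
  simp [fderiv_clm_apply hf (differentiableAt_const v)]

theorem fderiv_fderiv_add (hf : Differentiable ℝ f) (hg : Differentiable ℝ g)
    (hf' : DifferentiableAt ℝ (fderiv ℝ f) x) (hg' : DifferentiableAt ℝ (fderiv ℝ g) x) :
    fderiv ℝ (fderiv ℝ (f + g)) x = fderiv ℝ (fderiv ℝ f) x + fderiv ℝ (fderiv ℝ g) x := by
  have : fderiv ℝ (f + g) = fderiv ℝ f + fderiv ℝ g := funext fun y => fderiv_add (hf y) (hg y)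
  rw [this, fderiv_add hf' hg']

theorem fderiv_fderiv_sub (hf : Differentiable ℝ f) (hg : Differentiable ℝ g)
    (hf' : DifferentiableAt ℝ (fderiv ℝ f) x) (hg' : DifferentiableAt ℝ (fderiv ℝ g) x) :
    fderiv ℝ (fderiv ℝ (f - g)) x = fderiv ℝ (fderiv ℝ f) x - fderiv ℝ (fderiv ℝ g) x := by
  have : fderiv ℝ (f - g) = fderiv ℝ f - fderiv ℝ g := funext fun y => fderiv_sub (hf y) (hg y)
  rw [this, fderiv_sub hf' hg']

theorem fderiv_fderiv_apply_of_fderiv_apply_eq_comp {h : E → ℝ} {φ : ℝ → ℝ} {φ' : ℝ} {v : E}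
    (hfh : ∀ y, fderiv ℝ f y v = φ (h y)) (hf : DifferentiableAt ℝ (fderiv ℝ f) x)
    (hφ : HasDerivAt φ φ' (h x)) (hh : DifferentiableAt ℝ h x) (w : E) :
    fderiv ℝ (fderiv ℝ f) x w v = φ' * fderiv ℝ h x w := by
  rw [← fderiv_fderiv_apply_eq hf, show (fun y => fderiv ℝ f y v) = φ ∘ h from funext hfh,
    (hφ.comp_hasFDerivAt x hh.hasFDerivAt).fderiv]
  simp

end SecondDerivative

theorem pdu_eq_fderiv {f : ℝ × ℝ → ℝ} {p : ℝ × ℝ} (hf : DifferentiableAt ℝ f p) :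
    pdu f p = fderiv ℝ f p (1, 0) :=
  (hf.hasFDerivAt.comp_hasDerivAt p.1 ((hasDerivAt_id _).prodMk (hasDerivAt_const _ p.2))).deriv

theorem pdv_eq_fderiv {f : ℝ × ℝ → ℝ} {p : ℝ × ℝ} (hf : DifferentiableAt ℝ f p) :
    pdv f p = fderiv ℝ f p (0, 1) :=
  (hf.hasFDerivAt.comp_hasDerivAt p.2 ((hasDerivAt_const _ p.1).prodMk (hasDerivAt_id _))).deriv

theorem pdv_pdv_sub_pdu_pdu {f : ℝ × ℝ → ℝ} (hf : ContDiff ℝ 2 f) (p : ℝ × ℝ) :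
    pdv (pdv f) p - pdu (pdu f) p = fderiv ℝ (fderiv ℝ f) p (-1, 1) (1, 1) := by
  have hf₁ := hf.differentiable (by norm_num)
  have hf₂ := hf.differentiable_fderiv
  have hu : pdu f = fun q => fderiv ℝ f q (1, 0) := funext fun q => pdu_eq_fderiv (hf₁ q)
  have hv : pdv f = fun q => fderiv ℝ f q (0, 1) := funext fun q => pdv_eq_fderiv (hf₁ q)
  have hsymm := hf.contDiffAt.isSymmSndFDerivAt (x := p) (by simp) (1, 0) (0, 1)
  rw [hu, hv, pdu_eq_fderiv ((hf₂ p).clm_apply (differentiableAt_const _)),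
    pdv_eq_fderiv ((hf₂ p).clm_apply (differentiableAt_const _)),
    fderiv_fderiv_apply_eq (hf₂ p), fderiv_fderiv_apply_eq (hf₂ p),
    show ((-1, 1) : ℝ × ℝ) = (0, 1) - (1, 0) by simp,
    show ((1, 1) : ℝ × ℝ) = (0, 1) + (1, 0) by simp]
  simp only [map_add, map_sub, sub_apply, hsymm]
  ring

namespace BacklundSGh

variable {σ : ℝ} {θ₀ θ₁ : ℝ × ℝ → ℝ}

theorem fderiv_sub_apply (hB : BacklundSGh σ θ₀ θ₁) (h₀ : Differentiable ℝ θ₀)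
    (h₁ : Differentiable ℝ θ₁) (p : ℝ × ℝ) :
    fderiv ℝ (θ₁ - θ₀) p (1, 1) = σ * sinh ((θ₁ + θ₀) p) := by
  have hp := hB p
  rw [pdu_eq_fderiv (h₀ p), pdu_eq_fderiv (h₁ p), pdv_eq_fderiv (h₀ p), pdv_eq_fderiv (h₁ p)] at hp
  rw [fderiv_sub (h₁ p) (h₀ p), show ((1, 1) : ℝ × ℝ) = (1, 0) + (0, 1) by simp]
  simp only [sub_apply, map_add, Pi.add_apply]
  linarith

theorem fderiv_add_apply (hB : BacklundSGh σ θ₀ θ₁) (h₀ : Differentiable ℝ θ₀)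
    (h₁ : Differentiable ℝ θ₁) (p : ℝ × ℝ) :
    fderiv ℝ (θ₁ + θ₀) p (-1, 1) = σ⁻¹ * sinh ((θ₁ - θ₀) p) := by
  have hp := hB p
  rw [pdu_eq_fderiv (h₀ p), pdu_eq_fderiv (h₁ p), pdv_eq_fderiv (h₀ p), pdv_eq_fderiv (h₁ p)] at hp
  rw [fderiv_add (h₁ p) (h₀ p), show ((-1, 1) : ℝ × ℝ) = (0, 1) - (1, 0) by simp]
  simp only [add_apply, map_sub, Pi.sub_apply]
  linarith

theorem fderiv_fderiv_add_apply (hσ : σ ≠ 0) (h₀ : ContDiff ℝ 2 θ₀) (h₁ : ContDiff ℝ 2 θ₁)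
    (hB : BacklundSGh σ θ₀ θ₁) (p : ℝ × ℝ) :
    fderiv ℝ (fderiv ℝ (θ₁ + θ₀)) p (-1, 1) (1, 1) = cosh ((θ₁ - θ₀) p) * sinh ((θ₁ + θ₀) p) := by
  have h₀' := h₀.differentiable (by norm_num)
  have h₁' := h₁.differentiable (by norm_num)
  have hA : ContDiff ℝ 2 (θ₁ + θ₀) := h₁.add h₀
  rw [hA.contDiffAt.isSymmSndFDerivAt (by simp) (-1, 1) (1, 1),
    fderiv_fderiv_apply_of_fderiv_apply_eq_comp (φ := fun t => σ⁻¹ * sinh t)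
      (hB.fderiv_add_apply h₀' h₁') (hA.differentiable_fderiv p)
      ((hasDerivAt_sinh _).const_mul σ⁻¹) ((h₁' p).sub (h₀' p)),
    hB.fderiv_sub_apply h₀' h₁']
  field_simp

theorem fderiv_fderiv_sub_apply (hσ : σ ≠ 0) (h₀ : ContDiff ℝ 2 θ₀) (h₁ : ContDiff ℝ 2 θ₁)
    (hB : BacklundSGh σ θ₀ θ₁) (p : ℝ × ℝ) :
    fderiv ℝ (fderiv ℝ (θ₁ - θ₀)) p (-1, 1) (1, 1) = cosh ((θ₁ + θ₀) p) * sinh ((θ₁ - θ₀) p) := by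
  have h₀' := h₀.differentiable (by norm_num)
  have h₁' := h₁.differentiable (by norm_num)
  have hB' : ContDiff ℝ 2 (θ₁ - θ₀) := h₁.sub h₀
  rw [fderiv_fderiv_apply_of_fderiv_apply_eq_comp (φ := fun t => σ * sinh t)
      (hB.fderiv_sub_apply h₀' h₁') (hB'.differentiable_fderiv p)
      ((hasDerivAt_sinh _).const_mul σ) ((h₁' p).add (h₀' p)),
    hB.fderiv_add_apply h₀' h₁']
  field_simp

end BacklundSGh

theorem backlund_implies_hyperbolic_sinhGordon
    (σ : ℝ) (hσ : σ ≠ 0) (θ₀ θ₁ : ℝ × ℝ → ℝ)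
    (hθ₀ : ContDiff ℝ 2 θ₀) (hθ₁ : ContDiff ℝ 2 θ₁)
    (hB : BacklundSGh σ θ₀ θ₁) :
    (∀ p : ℝ × ℝ,
        pdv (pdv θ₀) p - pdu (pdu θ₀) p = Real.cosh (θ₀ p) * Real.sinh (θ₀ p)) ∧
    (∀ p : ℝ × ℝ,
        pdv (pdv θ₁) p - pdu (pdu θ₁) p = Real.cosh (θ₁ p) * Real.sinh (θ₁ p)) := by
  have h₀ := hθ₀.differentiable (by norm_num)
  have h₁ := hθ₁.differentiable (by norm_num)
  have hsum (p : ℝ × ℝ) : fderiv ℝ (fderiv ℝ θ₁) p (-1, 1) (1, 1) +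
      fderiv ℝ (fderiv ℝ θ₀) p (-1, 1) (1, 1) = cosh (θ₁ p - θ₀ p) * sinh (θ₁ p + θ₀ p) := by
    simpa [fderiv_fderiv_add h₁ h₀ (hθ₁.differentiable_fderiv p) (hθ₀.differentiable_fderiv p)]
      using hB.fderiv_fderiv_add_apply hσ hθ₀ hθ₁ p
  have hdiff (p : ℝ × ℝ) : fderiv ℝ (fderiv ℝ θ₁) p (-1, 1) (1, 1) -
      fderiv ℝ (fderiv ℝ θ₀) p (-1, 1) (1, 1) = cosh (θ₁ p + θ₀ p) * sinh (θ₁ p - θ₀ p) := by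
    simpa [fderiv_fderiv_sub h₁ h₀ (hθ₁.differentiable_fderiv p) (hθ₀.differentiable_fderiv p)]
      using hB.fderiv_fderiv_sub_apply hσ hθ₀ hθ₁ p
  refine ⟨fun p => ?_, fun p => ?_⟩
  · have h := sinh_sub (θ₁ p + θ₀ p) (θ₁ p - θ₀ p)
    rw [show θ₁ p + θ₀ p - (θ₁ p - θ₀ p) = 2 * θ₀ p by ring, sinh_two_mul] at h
    rw [pdv_pdv_sub_pdu_pdu hθ₀]
    linear_combination (hsum p - hdiff p - h) / 2
  · have h := sinh_add (θ₁ p + θ₀ p) (θ₁ p - θ₀ p)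
    rw [show θ₁ p + θ₀ p + (θ₁ p - θ₀ p) = 2 * θ₁ p by ring, sinh_two_mul] at h
    rw [pdv_pdv_sub_pdu_pdu hθ₁]
    linear_combination (hsum p + hdiff p - h) / 2
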